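/- arXiv:2602.07441 — 3 statements merged into one kernel-verified Lean document; each statement's English description precedes it below -/
import Mathlib

section
/- Let n ≥ 1, let Q : ℝⁿ → ℝ be differentiable, let a ∈ ℝⁿ, let λ ∈ ℝ, and define J(x) = λ·Q(x) − ‖x − a‖². Suppose x* ∈ ℝⁿ is the unique maximizer of Q, i.e., Q(x) < Q(x*) for all x ≠ x*, the gradient of Q at x* is 0, and x* ≠ a. Then every critical point x̂ of J (i.e., every point where the gradient of J vanishes) satisfies x̂ ≠ x* and Q(x̂) < Q(x*). -/
/-! At a stationary point of `Q` the `λ·Q` term contributes nothing to the derivative of `J`,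
so there `∇J = -2 (x - a)`, which vanishes only at `x = a`. Hence `x* ≠ a` is not a critical
point of `J`, and uniqueness of the maximizer makes every critical point strictly worse. -/

open InnerProductSpace

section

variable {E : Type*} [NormedAddCommGroup E] [InnerProductSpace ℝ E]

theorem HasFDerivAt.const_mul_sub_norm_sub_sq {f : E → ℝ} {f' : StrongDual ℝ E} {x : E}
    (hf : HasFDerivAt f f' x) (c : ℝ) (a : E) :
    HasFDerivAt (fun y => c * f y - ‖y - a‖ ^ 2) (c • f' - 2 • innerSL ℝ (x - a)) x := by
  have hnorm := ((hasFDerivAt_id x).sub_const a).norm_sq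
  rw [ContinuousLinearMap.comp_id] at hnorm
  exact (hf.const_mul c).sub hnorm

variable [CompleteSpace E]

theorem gradient_eq_zero_iff_fderiv_eq_zero {f : E → ℝ} {x : E} :
    gradient f x = 0 ↔ fderiv ℝ f x = 0 := by
  rw [← toDual_gradient, LinearIsometryEquiv.map_eq_zero_iff]

theorem eq_of_gradient_const_mul_sub_norm_sub_sq_eq_zero {f : E → ℝ} {x : E} {c : ℝ} {a : E}
    (hf : DifferentiableAt ℝ f x) (hfx : gradient f x = 0)
    (h : gradient (fun y => c * f y - ‖y - a‖ ^ 2) x = 0) : x = a := by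
  rw [gradient_eq_zero_iff_fderiv_eq_zero] at hfx h
  rw [(hf.hasFDerivAt.const_mul_sub_norm_sub_sq c a).fderiv, hfx, smul_zero, zero_sub,
    neg_eq_zero] at h
  have hself : 2 * ⟪x - a, x - a⟫_ℝ = 0 := by
    simpa only [smul_apply, zero_apply, innerSL_apply_apply, nsmul_eq_mul, Nat.cast_ofNat]
      using DFunLike.congr_fun h (x - a)
  simpa [sub_eq_zero] using hself

end

theorem stmt_1_general (n : ℕ)
    (Q : EuclideanSpace ℝ (Fin n) → ℝ) (hQ : Differentiable ℝ Q)
    (a : EuclideanSpace ℝ (Fin n)) (lam : ℝ)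
    (J : EuclideanSpace ℝ (Fin n) → ℝ)
    (hJ : ∀ x, J x = lam * Q x - ‖x - a‖ ^ 2)
    (xstar : EuclideanSpace ℝ (Fin n))
    (hmax : ∀ x, x ≠ xstar → Q x < Q xstar)
    (hcrit : gradient Q xstar = 0) (hne : xstar ≠ a) :
    ∀ xhat : EuclideanSpace ℝ (Fin n), gradient J xhat = 0 →
      xhat ≠ xstar ∧ Q xhat < Q xstar := by
  intro xhat hgrad
  rw [show J = fun x => lam * Q x - ‖x - a‖ ^ 2 from funext hJ] at hgrad
  have hxhat : xhat ≠ xstar := by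
    rintro rfl
    exact hne (eq_of_gradient_const_mul_sub_norm_sub_sq_eq_zero (hQ xhat) hcrit hgrad)
  exact ⟨hxhat, hmax xhat hxhat⟩

/-- Sub-optimality of MSE behavior-cloning regularization: if `x*` is the unique maximizer of
the differentiable function `Q`, with vanishing gradient at `x*`, and the dataset action
`a ≠ x*`, then every critical point `x̂` of `J x = λ·Q x − ‖x − a‖²` satisfies `x̂ ≠ x*` and
`Q x̂ < Q x*`. -/
theorem stmt_1 (n : ℕ) (hn : 1 ≤ n)
    (Q : EuclideanSpace ℝ (Fin n) → ℝ) (hQ : Differentiable ℝ Q)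
    (a : EuclideanSpace ℝ (Fin n)) (lam : ℝ)
    (J : EuclideanSpace ℝ (Fin n) → ℝ)
    (hJ : ∀ x, J x = lam * Q x - ‖x - a‖ ^ 2)
    (xstar : EuclideanSpace ℝ (Fin n))
    (hmax : ∀ x, x ≠ xstar → Q x < Q xstar)
    (hcrit : gradient Q xstar = 0) (hne : xstar ≠ a) :
    ∀ xhat : EuclideanSpace ℝ (Fin n), gradient J xhat = 0 →
      xhat ≠ xstar ∧ Q xhat < Q xstar :=
  stmt_1_general n Q hQ a lam J hJ xstar hmax hcrit hne
end

section
/- Let A be a nonempty finite type, let π_β : A → ℝ be a probability mass function, let Q : A → ℝ, and define the Boltzmann distribution π̂(a) = π_β(a)·exp(Q(a)) / Σ_{a'} π_β(a')·exp(Q(a')). Let Q* : A → ℝ. If there exists a_sub ∈ A with π_β(a_sub) > 0 and Q*(a_sub) < max_{a ∈ A} Q*(a), then Σ_a π̂(a)·Q*(a) < max_{a ∈ A} Q*(a); in particular, for every maximizer a* of Q*, π̂ is not the Dirac distribution at a* (since π̂(a_sub) > 0). -/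
open Finset

/-- Sub-optimality of KL behavior-cloning regularization: if the behavior policy `π_β` has
support on an action `a_sub` that is sub-optimal for `Q*`, then the Boltzmann policy
`π̂ a = π_β a · exp (Q a) / Z` has expected true value strictly below the optimum; in
particular `π̂ a_sub > 0`, so for every maximizer `a*` of `Q*`, `π̂` is not the Dirac
distribution at `a*`. -/
theorem stmt_6 {A : Type*} [Fintype A] [Nonempty A] [DecidableEq A]
    (πβ : A → ℝ) (hβ0 : ∀ a, 0 ≤ πβ a) (hβ1 : ∑ a, πβ a = 1)
    (Q : A → ℝ)
    (πhat : A → ℝ)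
    (hπhat : ∀ a, πhat a = πβ a * Real.exp (Q a) / ∑ a', πβ a' * Real.exp (Q a'))
    (Qstar : A → ℝ)
    (asub : A) (hsupp : 0 < πβ asub)
    (hsub : Qstar asub < univ.sup' univ_nonempty Qstar) :
    (∑ a, πhat a * Qstar a < univ.sup' univ_nonempty Qstar) ∧
    0 < πhat asub ∧
    (∀ astar : A, Qstar astar = univ.sup' univ_nonempty Qstar →
      πhat ≠ fun a => if a = astar then (1 : ℝ) else 0) := by
  set M := univ.sup' univ_nonempty Qstar with hM
  set Z := ∑ a', πβ a' * Real.exp (Q a') with hZ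
  have hZpos : 0 < Z := by
    apply Finset.sum_pos' (fun a _ => mul_nonneg (hβ0 a) (Real.exp_pos _).le)
    exact ⟨asub, mem_univ _, mul_pos hsupp (Real.exp_pos _)⟩
  have hπ0 : ∀ a, 0 ≤ πhat a := fun a => by
    rw [hπhat a]
    exact div_nonneg (mul_nonneg (hβ0 a) (Real.exp_pos _).le) hZpos.le
  have hπsub : 0 < πhat asub := by
    rw [hπhat asub]
    exact div_pos (mul_pos hsupp (Real.exp_pos _)) hZpos
  have hsum1 : ∑ a, πhat a = 1 := by
    simp only [hπhat]
    rw [← Finset.sum_div]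
    exact div_self hZpos.ne'
  have hle : ∀ a, Qstar a ≤ M := fun a => Finset.le_sup' Qstar (mem_univ a)
  have hlt : ∑ a, πhat a * Qstar a < M := by
    calc ∑ a, πhat a * Qstar a < ∑ a, πhat a * M := by
          apply Finset.sum_lt_sum
          · exact fun a _ => mul_le_mul_of_nonneg_left (hle a) (hπ0 a)
          · exact ⟨asub, mem_univ _, by exact mul_lt_mul_of_pos_left hsub hπsub⟩
      _ = M := by rw [← Finset.sum_mul, hsum1, one_mul]
  refine ⟨hlt, hπsub, fun astar hstar heq => ?_⟩
  by_cases h : asub = astar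
  · exact absurd (h ▸ hstar) hsub.ne
  · have := congrFun heq asub
    simp [h] at this
    exact hπsub.ne' this
end

section
/- Let (Ω, ℱ, μ) be a probability space, let n ≥ 1, let G : Ω → ℝⁿ be a square-integrable random vector whose covariance matrix Σ_G satisfies uᵀ Σ_G u ≥ μ₀·‖u‖² for all u ∈ ℝⁿ with μ₀ ≥ 0, let v ∈ ℝⁿ be a deterministic vector, let Y_β be a square-integrable real random variable, let γ ≥ 0, and set Y = Y_β + γ·⟨G, v⟩. If γ·√(μ₀)·‖v‖ ≥ √(Var(Y_β)), then for every constant c ∈ ℝ, E[(c − Y)²] ≥ (γ·√(μ₀)·‖v‖ − √(Var(Y_β)))². -/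
open MeasureTheory
open ProbabilityTheory
open scoped RealInnerProductSpace

/-!
Write `Y = Y_β + W` with `W = γ⟪G, v⟫`. A constant predictor `c` cannot beat the mean, so
`E[(c - Y)²] ≥ Var Y`. The standard deviation is a seminorm (Minkowski, via Cauchy–Schwarz for
covariance), hence `√Var Y ≥ √Var W - √Var Y_β`, and `Var W = γ² vᵀ Σ_G v ≥ γ² μ₀ ‖v‖²`.
Squaring the nonnegative lower bound gives the claim.
-/

section Variance

variable {Ω : Type*} {mΩ : MeasurableSpace Ω} {μ : Measure Ω} {X Y : Ω → ℝ}

lemma variance_le_integral_const_sub_sq [IsProbabilityMeasure μ]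
    (hX : AEStronglyMeasurable X μ) (c : ℝ) :
    Var[X; μ] ≤ ∫ ω, (c - X ω) ^ 2 ∂μ := by
  rw [← variance_const_sub hX c]
  exact variance_le_expectation_sq (by fun_prop)

/-- `t ↦ Var[X + t • Y]` is a nonnegative quadratic, so its discriminant is nonpositive. -/
lemma covariance_sq_le_variance_mul_variance [IsFiniteMeasure μ]
    (hX : MemLp X 2 μ) (hY : MemLp Y 2 μ) :
    cov[X, Y; μ] ^ 2 ≤ Var[X; μ] * Var[Y; μ] := by
  have hquad : ∀ t : ℝ, 0 ≤ Var[Y; μ] * (t * t) + 2 * cov[X, Y; μ] * t + Var[X; μ] := by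
    intro t
    have h := variance_nonneg (X + t • Y) μ
    rw [variance_add hX (hY.const_smul t), covariance_smul_right, variance_smul] at h
    linarith
  have := discrim_le_zero hquad
  rw [discrim] at this
  linarith

lemma sqrt_variance_add_le [IsFiniteMeasure μ] (hX : MemLp X 2 μ) (hY : MemLp Y 2 μ) :
    √Var[X + Y; μ] ≤ √Var[X; μ] + √Var[Y; μ] := by
  have hcov : cov[X, Y; μ] ≤ √Var[X; μ] * √Var[Y; μ] := by
    rw [← Real.sqrt_mul (variance_nonneg X μ)]
    exact (le_abs_self _).trans
      (Real.abs_le_sqrt (covariance_sq_le_variance_mul_variance hX hY))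
  rw [Real.sqrt_le_left (by positivity), variance_add hX hY, add_sq,
    Real.sq_sqrt (variance_nonneg X μ), Real.sq_sqrt (variance_nonneg Y μ)]
  linarith

lemma sqrt_variance_sub_sqrt_variance_le [IsFiniteMeasure μ] (hX : MemLp X 2 μ)
    (hY : MemLp Y 2 μ) :
    √Var[Y; μ] - √Var[X; μ] ≤ √Var[X + Y; μ] := by
  have h := sqrt_variance_add_le (hX.add hY) hX.neg
  rw [add_neg_cancel_comm, variance_neg] at h
  linarith

end Variance

lemma variance_inner_eq_sum_covariance {Ω ι : Type*} [Fintype ι] {mΩ : MeasurableSpace Ω}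
    {μ : Measure Ω} [IsFiniteMeasure μ] {G : Ω → EuclideanSpace ℝ ι} (hG : MemLp G 2 μ)
    (v : EuclideanSpace ℝ ι) :
    Var[fun ω ↦ ⟪G ω, v⟫; μ] = ∑ i, ∑ j, v i * cov[fun ω ↦ G ω i, fun ω ↦ G ω j; μ] * v j := by
  have hGi : ∀ i, MemLp (fun ω ↦ G ω i) 2 μ := fun i ↦
    (EuclideanSpace.proj (𝕜 := ℝ) i).comp_memLp' hG
  simp only [PiLp.inner_apply, RCLike.inner_apply, conj_trivial]
  rw [variance_fun_sum fun i ↦ (hGi i).const_mul (v i)]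
  simp only [covariance_const_mul_left, covariance_const_mul_right]
  exact Finset.sum_congr rfl fun i _ ↦ Finset.sum_congr rfl fun j _ ↦ by ring

theorem stmt_13_general {Ω : Type*} {mΩ : MeasurableSpace Ω} {μ : Measure Ω}
    [IsProbabilityMeasure μ] (n : ℕ)
    (G : Ω → EuclideanSpace ℝ (Fin n)) (hG : MemLp G 2 μ)
    (SigG : Matrix (Fin n) (Fin n) ℝ)
    (hSig : ∀ i j, SigG i j =
      ∫ ω, (G ω i - ∫ ω', G ω' i ∂μ) * (G ω j - ∫ ω', G ω' j ∂μ) ∂μ)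
    (μ₀ : ℝ) (hμ₀ : 0 ≤ μ₀)
    (hquad : ∀ u : EuclideanSpace ℝ (Fin n), μ₀ * ‖u‖ ^ 2 ≤ ∑ i, ∑ j, u i * SigG i j * u j)
    (v : EuclideanSpace ℝ (Fin n))
    (Yβ : Ω → ℝ) (hYβ : MemLp Yβ 2 μ)
    (γ : ℝ) (hγ : 0 ≤ γ)
    (Y : Ω → ℝ) (hY : ∀ ω, Y ω = Yβ ω + γ * ⟪G ω, v⟫)
    (hdom : Real.sqrt (∫ ω, (Yβ ω - ∫ ω', Yβ ω' ∂μ) ^ 2 ∂μ)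
      ≤ γ * Real.sqrt μ₀ * ‖v‖) :
    ∀ c : ℝ,
      (γ * Real.sqrt μ₀ * ‖v‖
          - Real.sqrt (∫ ω, (Yβ ω - ∫ ω', Yβ ω' ∂μ) ^ 2 ∂μ)) ^ 2
        ≤ ∫ ω, (c - Y ω) ^ 2 ∂μ := by
  intro c
  obtain rfl : Y = Yβ + fun ω ↦ γ * ⟪G ω, v⟫ := funext hY
  have hinner : MemLp (fun ω ↦ γ * ⟪G ω, v⟫) 2 μ := by
    have := ((innerSL ℝ v).comp_memLp' hG).const_mul γ
    simpa [real_inner_comm] using this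
  have hvar_inner : (γ * √μ₀ * ‖v‖) ^ 2 ≤ Var[fun ω ↦ γ * ⟪G ω, v⟫; μ] := by
    rw [variance_const_mul, variance_inner_eq_sum_covariance hG, mul_pow, mul_pow,
      Real.sq_sqrt hμ₀, mul_assoc]
    gcongr
    have hcov : ∀ i j, SigG i j = cov[fun ω ↦ G ω i, fun ω ↦ G ω j; μ] := hSig
    simpa only [hcov] using hquad v
  have hsd_inner : γ * √μ₀ * ‖v‖ ≤ √Var[fun ω ↦ γ * ⟪G ω, v⟫; μ] :=
    (Real.le_sqrt (by positivity) (variance_nonneg _ _)).mpr hvar_inner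
  rw [← variance_eq_integral hYβ.aemeasurable] at hdom ⊢
  calc _ ≤ √Var[Yβ + fun ω ↦ γ * ⟪G ω, v⟫; μ] ^ 2 := by
        refine pow_le_pow_left₀ (sub_nonneg.mpr hdom) ?_ 2
        linarith [sqrt_variance_sub_sqrt_variance_le hYβ hinner]
    _ = Var[Yβ + fun ω ↦ γ * ⟪G ω, v⟫; μ] := Real.sq_sqrt (variance_nonneg _ _)
    _ ≤ _ := variance_le_integral_const_sub_sq (hYβ.add hinner).1 c

/-- Single-transition form of the instability theorem: with the critic target
`Y = Y_β + γ·⟪G, v⟫`, where the covariance of the random gradient `G` satisfies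
`uᵀ Σ_G u ≥ μ₀·‖u‖²`, if `γ·√μ₀·‖v‖ ≥ √(Var Y_β)`, then for every constant `c`,
`E[(c − Y)²] ≥ (γ·√μ₀·‖v‖ − √(Var Y_β))²`. -/
theorem stmt_13 {Ω : Type*} {mΩ : MeasurableSpace Ω} {μ : Measure Ω}
    [IsProbabilityMeasure μ] (n : ℕ) (hn : 1 ≤ n)
    (G : Ω → EuclideanSpace ℝ (Fin n)) (hG : MemLp G 2 μ)
    (SigG : Matrix (Fin n) (Fin n) ℝ)
    (hSig : ∀ i j, SigG i j =
      ∫ ω, (G ω i - ∫ ω', G ω' i ∂μ) * (G ω j - ∫ ω', G ω' j ∂μ) ∂μ)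
    (μ₀ : ℝ) (hμ₀ : 0 ≤ μ₀)
    (hquad : ∀ u : EuclideanSpace ℝ (Fin n), μ₀ * ‖u‖ ^ 2 ≤ ∑ i, ∑ j, u i * SigG i j * u j)
    (v : EuclideanSpace ℝ (Fin n))
    (Yβ : Ω → ℝ) (hYβ : MemLp Yβ 2 μ)
    (γ : ℝ) (hγ : 0 ≤ γ)
    (Y : Ω → ℝ) (hY : ∀ ω, Y ω = Yβ ω + γ * ⟪G ω, v⟫)
    (hdom : Real.sqrt (∫ ω, (Yβ ω - ∫ ω', Yβ ω' ∂μ) ^ 2 ∂μ)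
      ≤ γ * Real.sqrt μ₀ * ‖v‖) :
    ∀ c : ℝ,
      (γ * Real.sqrt μ₀ * ‖v‖
          - Real.sqrt (∫ ω, (Yβ ω - ∫ ω', Yβ ω' ∂μ) ^ 2 ∂μ)) ^ 2
        ≤ ∫ ω, (c - Y ω) ^ 2 ∂μ :=
  stmt_13_general (mΩ := mΩ) n G hG SigG hSig μ₀ hμ₀ hquad v Yβ hYβ γ hγ Y hY hdom
end
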